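/- The Laplace kernel is characteristic on ℝ: for Borel probability measures P and Q on ℝ, the quantity MMD²(P,Q) = ∬ e^{−|u−u'|} dP(u)dP(u') + ∬ e^{−|v−v'|} dQ(v)dQ(v') − 2 ∬ e^{−|u−v|} dP(u)dQ(v) equals zero if and only if P = Q. -/

import Mathlib

/-!
The Laplace kernel factors through the features `φₜ(x) = e^{t-x} 1_{t ≤ x}`:
`∫ φₜ(u) φₜ(v) dt = e^{-|u-v|} / 2`. By Tonelli, `MMD²(P,Q) = 2 ∫ (m_P(t) - m_Q(t))² dt` with
`m_P(t) = ∫ φₜ dP`, so `MMD² = 0` forces `m_P = m_Q` almost everywhere, hence everywhere since both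
are left-continuous. Finally `m_P(t) = e^t ∫_{[t,∞)} e^{-x} dP(x)` determines the measure
`e^{-x} dP(x)` on every interval `[a, b)`, hence `P`.
-/

open MeasureTheory Real Set Filter Topology ENNReal

noncomputable def laplaceFeature (t x : ℝ) : ℝ≥0∞ :=
  if t ≤ x then ENNReal.ofReal (exp (t - x)) else 0

noncomputable def laplaceFeatureMean (μ : Measure ℝ) (t : ℝ) : ℝ≥0∞ :=
  ∫⁻ x, laplaceFeature t x ∂μ

lemma measurable_laplaceFeature : Measurable (Function.uncurry laplaceFeature) :=
  Measurable.ite (measurableSet_le measurable_fst measurable_snd)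
    (measurable_fst.sub measurable_snd).exp.ennreal_ofReal measurable_const

lemma laplaceFeature_le_one (t x : ℝ) : laplaceFeature t x ≤ 1 := by
  unfold laplaceFeature
  split_ifs with h
  · exact ENNReal.ofReal_le_one.2 (exp_le_one_iff.2 (by linarith))
  · exact zero_le_one

lemma ofReal_exp_neg_abs_sub_le_one (u v : ℝ) : ENNReal.ofReal (exp (-|u - v|)) ≤ 1 :=
  ENNReal.ofReal_le_one.2 (exp_le_one_iff.2 (neg_nonpos.2 (abs_nonneg _)))

lemma two_mul_lintegral_laplaceFeature_mul (u v : ℝ) :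
    2 * ∫⁻ t, laplaceFeature t u * laplaceFeature t v = ENNReal.ofReal (exp (-|u - v|)) := by
  have h_indicator : (fun t => laplaceFeature t u * laplaceFeature t v) = (Iic (min u v)).indicator
      fun t => ENNReal.ofReal (exp (2 * t) * exp (-(u + v))) := by
    ext t
    by_cases ht : t ≤ min u v
    · have ⟨htu, htv⟩ := le_min_iff.1 ht
      simp only [laplaceFeature, if_pos htu, if_pos htv, indicator_of_mem (mem_Iic.2 ht),
        ← ENNReal.ofReal_mul (exp_nonneg _), ← exp_add]
      ring_nf
    · rw [indicator_of_notMem (by simpa using ht)]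
      rcases min_lt_iff.1 (not_le.1 ht) with h | h <;> simp [laplaceFeature, not_le.2 h]
  rw [h_indicator, lintegral_indicator measurableSet_Iic,
    ← ofReal_integral_eq_lintegral_ofReal
      ((integrableOn_exp_mul_Iic two_pos _).mul_const _) (ae_of_all _ fun t => by positivity),
    integral_mul_const, integral_exp_mul_Iic two_pos, ← ENNReal.ofReal_ofNat 2,
    ← ENNReal.ofReal_mul zero_le_two, ← max_sub_min_eq_abs', ← min_add_max u v]
  -- `2 min u v - (u + v) = min u v - max u v = -|u - v|`
  congr 1
  rw [div_mul_eq_mul_div, mul_div_cancel₀ _ two_ne_zero, ← exp_add]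
  ring_nf

lemma laplaceFeatureMean_le_measure_univ (μ : Measure ℝ) (t : ℝ) :
    laplaceFeatureMean μ t ≤ μ univ :=
  (lintegral_mono fun x => laplaceFeature_le_one t x).trans_eq lintegral_one

lemma laplaceFeatureMean_ne_top (μ : Measure ℝ) [IsFiniteMeasure μ] (t : ℝ) :
    laplaceFeatureMean μ t ≠ ∞ :=
  ne_top_of_le_ne_top (measure_ne_top μ univ) (laplaceFeatureMean_le_measure_univ μ t)

@[fun_prop]
lemma measurable_laplaceFeatureMean (μ : Measure ℝ) [SFinite μ] :
    Measurable (laplaceFeatureMean μ) :=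
  measurable_laplaceFeature.lintegral_prod_right

lemma lintegral_lintegral_laplaceKernel (μ ν : Measure ℝ) [SFinite μ] [SFinite ν] :
    ∫⁻ u, ∫⁻ v, ENNReal.ofReal (exp (-|u - v|)) ∂ν ∂μ
      = 2 * ∫⁻ t, laplaceFeatureMean μ t * laplaceFeatureMean ν t := by
  have hφ := measurable_laplaceFeature
  calc ∫⁻ u, ∫⁻ v, ENNReal.ofReal (exp (-|u - v|)) ∂ν ∂μ
      = 2 * ∫⁻ u, ∫⁻ v, ∫⁻ t, laplaceFeature t u * laplaceFeature t v ∂volume ∂ν ∂μ := by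
        simp_rw [← two_mul_lintegral_laplaceFeature_mul, lintegral_const_mul' _ _ ofNat_ne_top]
    _ = 2 * ∫⁻ u, ∫⁻ t, laplaceFeature t u * laplaceFeatureMean ν t ∂volume ∂μ := by
        congr 1
        refine lintegral_congr fun u => ?_
        rw [lintegral_lintegral_swap ((hφ.comp (measurable_snd.prodMk measurable_const)).mul
          (hφ.comp (measurable_snd.prodMk measurable_fst))).aemeasurable]
        exact lintegral_congr fun t => lintegral_const_mul _ hφ.of_uncurry_left
    _ = 2 * ∫⁻ t, laplaceFeatureMean μ t * laplaceFeatureMean ν t := by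
        rw [lintegral_lintegral_swap ((hφ.comp (measurable_snd.prodMk measurable_fst)).mul
          ((measurable_laplaceFeatureMean ν).comp measurable_snd)).aemeasurable]
        congr 1
        exact lintegral_congr fun t => lintegral_mul_const _ hφ.of_uncurry_left

lemma lintegral_laplaceFeatureMean_mul_ne_top (μ ν : Measure ℝ) [IsFiniteMeasure μ]
    [IsFiniteMeasure ν] : ∫⁻ t, laplaceFeatureMean μ t * laplaceFeatureMean ν t ≠ ∞ := by
  have h_kernel_le : ∫⁻ u, ∫⁻ v, ENNReal.ofReal (exp (-|u - v|)) ∂ν ∂μ ≤ ∫⁻ _, ∫⁻ _, 1 ∂ν ∂μ :=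
    lintegral_mono fun u => lintegral_mono fun v => ofReal_exp_neg_abs_sub_le_one u v
  rw [lintegral_lintegral_laplaceKernel] at h_kernel_le
  refine ne_top_of_le_ne_top ?_ (le_mul_of_one_le_left' one_le_two |>.trans h_kernel_le)
  simpa using mul_ne_top (measure_ne_top ν univ) (measure_ne_top μ univ)

lemma integrable_toReal_laplaceFeatureMean_mul (μ ν : Measure ℝ) [IsFiniteMeasure μ]
    [IsFiniteMeasure ν] :
    Integrable fun t => (laplaceFeatureMean μ t).toReal * (laplaceFeatureMean ν t).toReal := by
  simp_rw [← toReal_mul]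
  exact integrable_toReal_of_lintegral_ne_top (by fun_prop)
    (lintegral_laplaceFeatureMean_mul_ne_top μ ν)

lemma integral_integral_laplaceKernel (μ ν : Measure ℝ) [IsFiniteMeasure μ] [IsFiniteMeasure ν] :
    ∫ u, ∫ v, exp (-|u - v|) ∂ν ∂μ
      = 2 * ∫ t, (laplaceFeatureMean μ t).toReal * (laplaceFeatureMean ν t).toReal := by
  have h_meas : Measurable fun p : ℝ × ℝ => ENNReal.ofReal (exp (-|p.1 - p.2|)) := by fun_prop
  have h_inner (u : ℝ) : ∫ v, exp (-|u - v|) ∂ν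
      = (∫⁻ v, ENNReal.ofReal (exp (-|u - v|)) ∂ν).toReal :=
    integral_eq_lintegral_of_nonneg_ae (ae_of_all _ fun v => (exp_pos _).le) (by fun_prop)
  have h_inner_lt_top (u : ℝ) : ∫⁻ v, ENNReal.ofReal (exp (-|u - v|)) ∂ν < ∞ :=
    (lintegral_mono fun v => ofReal_exp_neg_abs_sub_le_one u v).trans_lt (by simp)
  simp_rw [h_inner, ← toReal_mul]
  rw [integral_toReal h_meas.lintegral_prod_right.aemeasurable (ae_of_all _ h_inner_lt_top),
    integral_toReal (by fun_prop) (ae_of_all _ fun t => (mul_ne_top (laplaceFeatureMean_ne_top μ t)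
        (laplaceFeatureMean_ne_top ν t)).lt_top),
    lintegral_lintegral_laplaceKernel, toReal_mul, toReal_ofNat]

section IntegralSubSq

variable {α : Type*} [MeasurableSpace α] {μ : Measure α} {f g : α → ℝ}

lemma integrable_sub_sq (hff : Integrable (fun x => f x * f x) μ)
    (hfg : Integrable (fun x => f x * g x) μ) (hgg : Integrable (fun x => g x * g x) μ) :
    Integrable (fun x => (f x - g x) ^ 2) μ :=
  ((hff.sub' (hfg.const_mul 2)).fun_add hgg).congr (ae_of_all _ fun x => by ring)

lemma integral_sub_sq (hff : Integrable (fun x => f x * f x) μ)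
    (hfg : Integrable (fun x => f x * g x) μ) (hgg : Integrable (fun x => g x * g x) μ) :
    ∫ x, (f x - g x) ^ 2 ∂μ
      = (∫ x, f x * f x ∂μ) - 2 * (∫ x, f x * g x ∂μ) + ∫ x, g x * g x ∂μ := by
  rw [← integral_const_mul, ← integral_sub hff (hfg.const_mul 2),
    ← integral_add (hff.sub' (hfg.const_mul 2)) hgg]
  exact integral_congr_ae (ae_of_all _ fun x => by ring)

end IntegralSubSq

lemma laplace_mmd_eq_two_mul_integral_sq (μ ν : Measure ℝ) [IsFiniteMeasure μ]
    [IsFiniteMeasure ν] :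
    (∫ u, ∫ u', exp (-|u - u'|) ∂μ ∂μ) + (∫ v, ∫ v', exp (-|v - v'|) ∂ν ∂ν)
        - 2 * (∫ u, ∫ v, exp (-|u - v|) ∂ν ∂μ)
      = 2 * ∫ t, ((laplaceFeatureMean μ t).toReal - (laplaceFeatureMean ν t).toReal) ^ 2 := by
  rw [integral_integral_laplaceKernel, integral_integral_laplaceKernel,
    integral_integral_laplaceKernel, integral_sub_sq (integrable_toReal_laplaceFeatureMean_mul μ μ)
      (integrable_toReal_laplaceFeatureMean_mul μ ν) (integrable_toReal_laplaceFeatureMean_mul ν ν)]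
  ring

lemma continuousWithinAt_Iio_laplaceFeatureMean (μ : Measure ℝ) [IsFiniteMeasure μ] (t : ℝ) :
    ContinuousWithinAt (laplaceFeatureMean μ) (Iio t) t := by
  refine tendsto_lintegral_filter_of_dominated_convergence (fun _ => 1)
    (Eventually.of_forall fun s => measurable_laplaceFeature.of_uncurry_left)
    (Eventually.of_forall fun s => ae_of_all _ (laplaceFeature_le_one s))
    (by simp) (ae_of_all _ fun x => ?_)
  rcases lt_or_ge x t with hxt | htx
  · rw [laplaceFeature, if_neg (not_le.2 hxt)]
    refine tendsto_const_nhds.congr' ?_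
    filter_upwards [Ioo_mem_nhdsLT hxt] with s hs
    rw [laplaceFeature, if_neg (not_le.2 hs.1)]
  · rw [laplaceFeature, if_pos htx]
    refine (ENNReal.tendsto_ofReal ((by fun_prop : Continuous fun s => exp (s - x)).tendsto t)
      |>.mono_left nhdsWithin_le_nhds).congr' ?_
    filter_upwards [self_mem_nhdsWithin] with s hs
    rw [laplaceFeature, if_pos ((mem_Iio.1 hs).le.trans htx)]

lemma eq_of_ae_eq_of_continuousWithinAt_Iio {α X : Type*} [TopologicalSpace α] [LinearOrder α]
    [OrderTopology α] [NoMinOrder α] [DenselyOrdered α] [MeasurableSpace α] {μ : Measure α}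
    [μ.IsOpenPosMeasure] [TopologicalSpace X] [T2Space X] {f g : α → X} (h : f =ᵐ[μ] g)
    (hf : ∀ t, ContinuousWithinAt f (Iio t) t) (hg : ∀ t, ContinuousWithinAt g (Iio t) t) :
    f = g := by
  funext t
  refine tendsto_nhds_unique_of_frequently_eq (hf t) (hg t) (frequently_iff.2 fun hU => ?_)
  obtain ⟨a, ha, hU⟩ := mem_nhdsLT_iff_exists_Ioo_subset.1 hU
  obtain ⟨s, hs, hfg⟩ := Measure.exists_mem_of_measure_ne_zero_of_ae
    (isOpen_Ioo.measure_ne_zero μ (nonempty_Ioo.2 ha)) (ae_restrict_of_ae h)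
  exact ⟨s, hU hs, hfg⟩

lemma laplaceFeatureMean_eq_mul_withDensity_Ici (μ : Measure ℝ) (t : ℝ) :
    laplaceFeatureMean μ t
      = ENNReal.ofReal (exp t) * μ.withDensity (fun x => ENNReal.ofReal (exp (-x))) (Ici t) := by
  rw [withDensity_apply _ measurableSet_Ici, ← lintegral_const_mul' _ _ ofReal_ne_top,
    ← lintegral_indicator measurableSet_Ici]
  refine lintegral_congr fun x => ?_
  by_cases htx : t ≤ x
  · rw [laplaceFeature, if_pos htx, indicator_of_mem (mem_Ici.2 htx),
      ← ENNReal.ofReal_mul (exp_pos _).le, ← exp_add, sub_eq_add_neg]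
  · rw [laplaceFeature, if_neg htx, indicator_of_notMem (by simpa using htx)]

theorem eq_of_laplaceFeatureMean_eq {μ ν : Measure ℝ} [IsFiniteMeasure μ]
    (h : laplaceFeatureMean μ = laplaceFeatureMean ν) : μ = ν := by
  set w : ℝ → ℝ≥0∞ := fun x => ENNReal.ofReal (exp (-x))
  have hw : Measurable w := by fun_prop
  have h_exp_ne_zero (t : ℝ) : ENNReal.ofReal (exp t) ≠ 0 := (ofReal_pos.2 (exp_pos t)).ne'
  have h_tail (t : ℝ) : μ.withDensity w (Ici t) = ν.withDensity w (Ici t) := by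
    have := congrFun h t
    simp only [laplaceFeatureMean_eq_mul_withDensity_Ici] at this
    exact (ENNReal.mul_right_inj (h_exp_ne_zero t) ofReal_ne_top).1 this
  have h_tail_ne_top (t : ℝ) : μ.withDensity w (Ici t) ≠ ∞ := fun h_top => by
    have := laplaceFeatureMean_ne_top μ t
    rw [laplaceFeatureMean_eq_mul_withDensity_Ici] at this
    exact this (mul_eq_top.2 (Or.inl ⟨h_exp_ne_zero t, h_top⟩))
  have h_weighted : μ.withDensity w = ν.withDensity w := by
    refine Measure.ext_of_Ico' _ _
      (fun a b _ => ne_top_of_le_ne_top (h_tail_ne_top a) (measure_mono Ico_subset_Ici_self))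
      fun a b hab => ?_
    have hsub : Ici b ⊆ Ici a := Ici_subset_Ici.2 hab.le
    rw [← Ici_sdiff_Ici, measure_sdiff hsub nullMeasurableSet_Ici (h_tail_ne_top b),
      measure_sdiff hsub nullMeasurableSet_Ici (h_tail b ▸ h_tail_ne_top b), h_tail, h_tail]
  have hw_ne_zero (x : ℝ) : w x ≠ 0 := h_exp_ne_zero (-x)
  have hw_ne_top (x : ℝ) : w x ≠ ∞ := ofReal_ne_top
  rw [← withDensity_inv_same hw (μ := μ) (ae_of_all _ hw_ne_zero) (ae_of_all _ hw_ne_top),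
    h_weighted, withDensity_inv_same hw (ae_of_all _ hw_ne_zero) (ae_of_all _ hw_ne_top)]

/-- The Laplace kernel `k(u,v) = exp (-|u - v|)` is characteristic on `ℝ`:
for Borel probability measures `P` and `Q` on `ℝ`, the squared maximum mean discrepancy
`MMD²(P,Q) = E[k(U,U')] + E[k(V,V')] - 2 E[k(U,V)]`
(with `U, U' ∼ P` and `V, V' ∼ Q` all independent) vanishes if and only if `P = Q`. -/
theorem laplace_kernel_characteristic (P Q : Measure ℝ)
    [IsProbabilityMeasure P] [IsProbabilityMeasure Q] :
    (∫ u, ∫ u', Real.exp (-|u - u'|) ∂P ∂P)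
        + (∫ v, ∫ v', Real.exp (-|v - v'|) ∂Q ∂Q)
        - 2 * (∫ u, ∫ v, Real.exp (-|u - v|) ∂Q ∂P) = 0
    ↔ P = Q := by
  refine ⟨fun h_mmd => ?_, by rintro rfl; ring⟩
  rw [laplace_mmd_eq_two_mul_integral_sq, mul_eq_zero, or_iff_right two_ne_zero,
    integral_eq_zero_iff_of_nonneg (fun t => sq_nonneg _)
      (integrable_sub_sq (integrable_toReal_laplaceFeatureMean_mul P P)
        (integrable_toReal_laplaceFeatureMean_mul P Q)
        (integrable_toReal_laplaceFeatureMean_mul Q Q))] at h_mmd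
  have h_ae : laplaceFeatureMean P =ᵐ[volume] laplaceFeatureMean Q := by
    filter_upwards [h_mmd] with t ht
    exact (toReal_eq_toReal_iff' (laplaceFeatureMean_ne_top P t)
      (laplaceFeatureMean_ne_top Q t)).1 (sub_eq_zero.1 (pow_eq_zero_iff two_ne_zero |>.1 ht))
  exact eq_of_laplaceFeatureMean_eq (eq_of_ae_eq_of_continuousWithinAt_Iio h_ae
    (continuousWithinAt_Iio_laplaceFeatureMean P) (continuousWithinAt_Iio_laplaceFeatureMean Q))
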